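/- Let c > 0, A ∈ ℝ, let f : ℝ → ℝ be continuous, and let u = (u₁,u₂) : ℝ² → ℝ² be a C¹ vector field with ∂₁u₁ + ∂₂u₂ ≡ 0, with u(x₁+1, x₂) = u(x₁, x₂+1) = u(x₁,x₂) for all x, and with ∫₀¹ u₁(0, x₂) dx₂ = 0. Let T : ℝ × ℝ² → ℝ be twice continuously differentiable and satisfy: (a) ∂_t T + A·u(x)·∇_x T = Δ_x T + f(T) at every point; (b) T(t, x₁, x₂+1) = T(t, x₁, x₂) and T(t + 1/c, x₁+1, x₂) = T(t, x₁, x₂) for all (t, x₁, x₂); (c) T(t, x₁, x₂) → 1 as x₁ → −∞ and T(t, x₁, x₂) → 0 as x₁ → +∞, uniformly in x₂ ∈ [0,1] and t ∈ [0, 1/c]; (d) the functions (t,x) ↦ ∂_t T, f(T(t,x)), u(x)·∇_x T, and Δ_x T are Lebesgue integrable over [0,1/c] × (ℝ × (0,1)); (e) x ↦ T(0, x₁, x₂) − χ_{\{x₁ < 0\}} is integrable over ℝ × (0,1); (f) for every t ∈ [0, 1/c], ∫₀¹ ∂T/∂x₁(t, R, x₂) dx₂ → 0 as R → ±∞. Then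 ∫₀^{1/c} ∫_{ℝ×(0,1)} f(T(t,x)) dx dt = 1. -/

import Mathlib

/-!
Integrate the equation over one period `[0, 1/c] × ℝ × (0, 1)`. In time, the pulsating-front
relation `T(1/c, x₁, x₂) = T(0, x₁ - 1, x₂)` turns `∫∫ ∂ₜT` into the integral of
`T(0, x₁ - 1, x₂) - T(0, x₁, x₂)`, which is `1`: writing `T(0) = G + χ_{x₁ < 0}` with `G`
integrable, the `G`-part cancels by translation invariance and the jump of the step contributes
`|[0, 1) × (0, 1)| = 1`. In space, after integration in `x₂` over a period, `ΔT` and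
`u · ∇T = ∇ · (T u)` become `x₁`-derivatives of `∫₀¹ ∂₁T dx₂` and of `∫₀¹ T u₁ dx₂`, because
the `∂₂`-terms are derivatives of `x₂`-periodic functions. Both vanish at `x₁ = ±∞`, the second
because the flux `∫₀¹ u₁ dx₂` does not depend on `x₁` and is therefore zero.
-/

open MeasureTheory Set Filter

/-- Time derivative `∂_t T` of a function `T = T(t, x₁, x₂)`. -/
noncomputable def pdt (T : ℝ → ℝ → ℝ → ℝ) (t x₁ x₂ : ℝ) : ℝ :=
  deriv (fun s => T s x₁ x₂) t

/-- First spatial partial derivative `∂_{x₁} T`. -/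
noncomputable def pd1 (T : ℝ → ℝ → ℝ → ℝ) (t x₁ x₂ : ℝ) : ℝ :=
  deriv (fun a => T t a x₂) x₁

/-- Second spatial partial derivative `∂_{x₂} T`. -/
noncomputable def pd2 (T : ℝ → ℝ → ℝ → ℝ) (t x₁ x₂ : ℝ) : ℝ :=
  deriv (fun b => T t x₁ b) x₂

/-- Spatial Laplacian `Δ_x T = ∂²_{x₁} T + ∂²_{x₂} T`. -/
noncomputable def plap (T : ℝ → ℝ → ℝ → ℝ) (t x₁ x₂ : ℝ) : ℝ :=
  deriv (fun a => deriv (fun a' => T t a' x₂) a) x₁ +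
    deriv (fun b => deriv (fun b' => T t x₁ b') b) x₂

open Function Topology
open scoped ENNReal

theorem Function.Periodic.deriv {𝕜 F : Type*} [NontriviallyNormedField 𝕜] [NormedAddCommGroup F]
    [NormedSpace 𝕜 F] {f : 𝕜 → F} {c : 𝕜} (hf : Periodic f c) : Periodic (deriv f) c :=
  fun x => by rw [← deriv_comp_add_const, hf.funext]

theorem Continuous.exists_forall_norm_le_of_periodic {E : Type*} [NormedAddCommGroup E]
    {u : ℝ × ℝ → E} (hu : Continuous u) (h₁ : ∀ b, Periodic (fun a => u (a, b)) 1)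
    (h₂ : ∀ a, Periodic (fun b => u (a, b)) 1) : ∃ C, ∀ p, ‖u p‖ ≤ C := by
  obtain ⟨C, hC⟩ := (isCompact_Icc.prod isCompact_Icc).exists_bound_of_continuousOn
    (f := u) (s := Icc (0 : ℝ) 1 ×ˢ Icc (0 : ℝ) 1) hu.continuousOn
  refine ⟨C, fun ⟨a, b⟩ => ?_⟩
  obtain ⟨a', ha', hua⟩ := (h₁ b).exists_mem_Ico₀ one_pos a
  obtain ⟨b', hb', hub⟩ := (h₂ a').exists_mem_Ico₀ one_pos b
  rw [hua, hub]
  exact hC _ ⟨Ico_subset_Icc_self ha', Ico_subset_Icc_self hb'⟩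

noncomputable section PartialDerivatives

variable {F : Type*} [NormedAddCommGroup F] [NormedSpace ℝ F]

def partialFst (g : ℝ → ℝ → F) (a b : ℝ) : F := deriv (g · b) a

def partialSnd (g : ℝ → ℝ → F) (a b : ℝ) : F := deriv (g a) b

variable {g : ℝ → ℝ → F}

theorem Differentiable.hasDerivAt_partialFst (hg : Differentiable ℝ (uncurry g)) (a b : ℝ) :
    HasDerivAt (g · b) (partialFst g a b) a :=
  ((hg.comp (differentiable_id.prodMk (differentiable_const b))) a).hasDerivAt

theorem Differentiable.hasDerivAt_partialSnd (hg : Differentiable ℝ (uncurry g)) (a b : ℝ) :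
    HasDerivAt (g a) (partialSnd g a b) b :=
  ((hg.comp ((differentiable_const a).prodMk differentiable_id)) b).hasDerivAt

theorem partialFst_eq_fderiv (hg : Differentiable ℝ (uncurry g)) (p : ℝ × ℝ) :
    partialFst g p.1 p.2 = fderiv ℝ (uncurry g) p (1, 0) := by
  have h : HasDerivAt (g · p.2) (fderiv ℝ (uncurry g) p (1, 0)) p.1 :=
    HasFDerivAt.comp_hasDerivAt (l := uncurry g) p.1 (hg p).hasFDerivAt
      ((hasDerivAt_id p.1).prodMk (hasDerivAt_const p.1 p.2))
  exact h.deriv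

theorem partialSnd_eq_fderiv (hg : Differentiable ℝ (uncurry g)) (p : ℝ × ℝ) :
    partialSnd g p.1 p.2 = fderiv ℝ (uncurry g) p (0, 1) := by
  have h : HasDerivAt (g p.1) (fderiv ℝ (uncurry g) p (0, 1)) p.2 :=
    HasFDerivAt.comp_hasDerivAt (l := uncurry g) p.2 (hg p).hasFDerivAt
      ((hasDerivAt_const p.2 p.1).prodMk (hasDerivAt_id p.2))
  exact h.deriv

theorem ContDiff.uncurry_partialFst {m n : WithTop ℕ∞} (hg : ContDiff ℝ n (uncurry g))
    (hmn : m + 1 ≤ n) : ContDiff ℝ m (uncurry (partialFst g)) := by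
  rw [show uncurry (partialFst g) = fun p => fderiv ℝ (uncurry g) p (1, 0) from
    funext (partialFst_eq_fderiv (hg.differentiable (by rintro rfl; simp at hmn)))]
  exact (hg.fderiv_right hmn).clm_apply contDiff_const

theorem ContDiff.uncurry_partialSnd {m n : WithTop ℕ∞} (hg : ContDiff ℝ n (uncurry g))
    (hmn : m + 1 ≤ n) : ContDiff ℝ m (uncurry (partialSnd g)) := by
  rw [show uncurry (partialSnd g) = fun p => fderiv ℝ (uncurry g) p (0, 1) from
    funext (partialSnd_eq_fderiv (hg.differentiable (by rintro rfl; simp at hmn)))]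
  exact (hg.fderiv_right hmn).clm_apply contDiff_const

theorem ContDiff.continuous_uncurry_partialFst {n : WithTop ℕ∞} (hg : ContDiff ℝ n (uncurry g))
    (hn : 1 ≤ n) : Continuous (uncurry (partialFst g)) :=
  (hg.uncurry_partialFst (m := 0) (by simpa using hn)).continuous

theorem ContDiff.continuous_uncurry_partialSnd {n : WithTop ℕ∞} (hg : ContDiff ℝ n (uncurry g))
    (hn : 1 ≤ n) : Continuous (uncurry (partialSnd g)) :=
  (hg.uncurry_partialSnd (m := 0) (by simpa using hn)).continuous

end PartialDerivatives

theorem hasDerivAt_setIntegral_of_continuous {P P' : ℝ → ℝ → ℝ} {s : Set ℝ}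
    (hsm : MeasurableSet s) (hs : Bornology.IsBounded s) (hP : Continuous (uncurry P))
    (hP' : Continuous (uncurry P')) (hd : ∀ a b, HasDerivAt (P · b) (P' a b) a) (a₀ : ℝ) :
    HasDerivAt (fun a => ∫ b in s, P a b) (∫ b in s, P' a₀ b) a₀ := by
  obtain ⟨C, hC⟩ := ((isCompact_closedBall a₀ 1).prod
    hs.isCompact_closure).exists_bound_of_continuousOn hP'.continuousOn
  refine (hasDerivAt_integral_of_dominated_loc_of_deriv_le (Metric.closedBall_mem_nhds a₀ one_pos)
    (Eventually.of_forall fun a => (hP.uncurry_left a).aestronglyMeasurable)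
    (((hP.uncurry_left a₀).continuousOn.integrableOn_compact hs.isCompact_closure).mono_set
      subset_closure)
    (hP'.uncurry_left a₀).aestronglyMeasurable (bound := fun _ => C) ?_
    (integrableOn_const hs.measure_lt_top.ne) (Eventually.of_forall fun b a _ => hd a b)).2
  filter_upwards [ae_restrict_mem hsm] with b hb a ha
  exact hC (a, b) ⟨ha, subset_closure hb⟩

theorem integral_Ioo_deriv_eq_zero_of_periodic {g g' : ℝ → ℝ} {c : ℝ} (hc : 0 ≤ c)
    (hg : ∀ y, HasDerivAt g (g' y) y) (hg' : Continuous g') (hper : Periodic g c) :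
    ∫ y in Ioo 0 c, g' y = 0 := by
  rw [← integral_Ioc_eq_integral_Ioo, ← intervalIntegral.integral_of_le hc,
    intervalIntegral.integral_eq_sub_of_hasDerivAt (fun y _ => hg y) (hg'.intervalIntegrable 0 c),
    ← zero_add c, hper, sub_self]

theorem hasDerivAt_integral_Ioo_add_of_periodic {P P₁ Q Q₂ : ℝ → ℝ → ℝ} {c : ℝ} (hc : 0 ≤ c)
    (hP : Continuous (uncurry P)) (hP₁ : Continuous (uncurry P₁)) (hQ₂ : Continuous (uncurry Q₂))
    (hdP : ∀ a b, HasDerivAt (P · b) (P₁ a b) a) (hdQ : ∀ a b, HasDerivAt (Q a) (Q₂ a b) b)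
    (hQ : ∀ a, Periodic (Q a) c) (a : ℝ) :
    HasDerivAt (fun a => ∫ b in Ioo 0 c, P a b) (∫ b in Ioo 0 c, (P₁ a b + Q₂ a b)) a := by
  rw [integral_add ((hP₁.uncurry_left a).integrableOn_Icc.mono_set Ioo_subset_Icc_self)
      ((hQ₂.uncurry_left a).integrableOn_Icc.mono_set Ioo_subset_Icc_self),
    integral_Ioo_deriv_eq_zero_of_periodic hc (hdQ a) (hQ₂.uncurry_left a) (hQ a), add_zero]
  exact hasDerivAt_setIntegral_of_continuous measurableSet_Ioo (Metric.isBounded_Ioo 0 c)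
    hP hP₁ hdP a

theorem volume_restrict_prod {α β : Type*} [MeasureSpace α] [MeasureSpace β]
    [SFinite (volume : Measure α)] [SFinite (volume : Measure β)] (s : Set α) (t : Set β) :
    (volume : Measure (α × β)).restrict (s ×ˢ t) =
      (volume.restrict s).prod (volume.restrict t) := by
  rw [Measure.volume_eq_prod, Measure.prod_restrict]

theorem integral_prod_eq_zero_of_hasDerivAt {X : Type*} [MeasurableSpace X] {ν : Measure X}
    [SFinite ν] {h : ℝ → X → ℝ} {Ψ : ℝ → ℝ} (hint : Integrable (uncurry h) (volume.prod ν))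
    (hΨ : ∀ a, HasDerivAt Ψ (∫ y, h a y ∂ν) a) (hbot : Tendsto Ψ atBot (𝓝 0))
    (htop : Tendsto Ψ atTop (𝓝 0)) :
    ∫ p, uncurry h p ∂(volume.prod ν) = 0 := by
  rw [integral_prod _ hint]
  simpa using integral_of_hasDerivAt_of_tendsto hΨ hint.integral_prod_left hbot htop

theorem integral_restrict_prod_eq_zero_of_slices {α X E : Type*} [MeasurableSpace α]
    [MeasurableSpace X] [NormedAddCommGroup E] [NormedSpace ℝ E] {μ : Measure α}
    {ν : Measure X} [SFinite μ] [SFinite ν] {s : Set α} (hs : MeasurableSet s) {g : α × X → E}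
    (hg : Integrable g ((μ.restrict s).prod ν))
    (h0 : ∀ t ∈ s, Integrable (fun x => g (t, x)) ν → ∫ x, g (t, x) ∂ν = 0) :
    ∫ p, g p ∂((μ.restrict s).prod ν) = 0 := by
  rw [integral_prod _ hg]
  refine integral_eq_zero_of_ae ?_
  filter_upwards [hg.prod_right_ae, ae_restrict_mem hs] with t ht hts using h0 t hts ht

theorem integral_restrict_Icc_prod_eq_integral_sub {X : Type*} [MeasurableSpace X]
    {ν : Measure X} [SFinite ν] {F F' : ℝ → X → ℝ} {τ : ℝ} (hτ : 0 ≤ τ)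
    (hF : ∀ t x, HasDerivAt (F · x) (F' t x) t)
    (hint : Integrable (uncurry F') ((volume.restrict (Icc 0 τ)).prod ν)) :
    ∫ p, uncurry F' p ∂((volume.restrict (Icc 0 τ)).prod ν) = ∫ x, (F τ x - F 0 x) ∂ν := by
  rw [integral_prod_symm _ hint]
  refine integral_congr_ae ?_
  filter_upwards [hint.prod_left_ae] with x hx
  rw [integral_Icc_eq_integral_Ioc, ← intervalIntegral.integral_of_le hτ]
  exact intervalIntegral.integral_eq_sub_of_hasDerivAt (fun t _ => hF t x)
    ((intervalIntegrable_iff_integrableOn_Icc_of_le hτ).2 hx)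

theorem integral_prod_shift_sub_eq {X : Type*} [MeasurableSpace X] {ν : Measure X}
    [IsFiniteMeasure ν] {φ : ℝ → X → ℝ}
    (hφ : Integrable (fun p : ℝ × X => φ p.1 p.2 - if p.1 < 0 then 1 else 0) (volume.prod ν)) :
    ∫ p : ℝ × X, (φ (p.1 - 1) p.2 - φ p.1 p.2) ∂(volume.prod ν) = ν.real univ := by
  set G := fun p : ℝ × X => φ p.1 p.2 - if p.1 < 0 then 1 else 0
  let e : ℝ × X ≃ᵐ ℝ × X := (MeasurableEquiv.subRight 1).prodCongr (MeasurableEquiv.refl X)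
  have he : MeasurePreserving e (volume.prod ν) (volume.prod ν) :=
    (measurePreserving_sub_right volume 1).prod (MeasurePreserving.id ν)
  have hGe : Integrable (fun p => G (e p)) (volume.prod ν) :=
    (he.integrable_comp_emb e.measurableEmbedding).2 hφ
  have hind : Integrable (fun p : ℝ × X => (Ico (0 : ℝ) 1).indicator 1 p.1) (volume.prod ν) :=
    ((integrableOn_const (C := (1 : ℝ)) measure_Ico_lt_top.ne).integrable_indicator
      measurableSet_Ico).comp_fst ν
  have hstep : ∀ p : ℝ × X, φ (p.1 - 1) p.2 - φ p.1 p.2 =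
      (G (e p) - G p) + (Ico (0 : ℝ) 1).indicator 1 p.1 := by
    intro p
    have hep : e p = (p.1 - 1, p.2) := rfl
    simp only [G, hep, indicator_apply, mem_Ico, Pi.one_apply]
    split_ifs <;> grind
  calc ∫ p : ℝ × X, (φ (p.1 - 1) p.2 - φ p.1 p.2) ∂(volume.prod ν)
      = (∫ p, G (e p) ∂(volume.prod ν) - ∫ p, G p ∂(volume.prod ν)) +
          ∫ p : ℝ × X, (Ico (0 : ℝ) 1).indicator 1 p.1 ∂(volume.prod ν) := by
        simp_rw [hstep]
        rw [integral_add (f := fun p => G (e p) - G p) (hGe.sub hφ) hind, integral_sub hGe hφ]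
    _ = ν.real univ := by
        rw [he.integral_comp' G, sub_self, zero_add, integral_fun_fst,
          integral_indicator_one measurableSet_Ico]
        simp

theorem integral_restrict_Icc_prod_prod_deriv_eq_of_shift {X : Type*} [MeasurableSpace X]
    {ν : Measure X} [IsFiniteMeasure ν] {F F' : ℝ → ℝ → X → ℝ} {τ : ℝ} (hτ : 0 ≤ τ)
    (hF : ∀ t a y, HasDerivAt (F · a y) (F' t a y) t) (hshift : ∀ a y, F τ (a + 1) y = F 0 a y)
    (hφ : Integrable (fun p : ℝ × X => F 0 p.1 p.2 - if p.1 < 0 then 1 else 0) (volume.prod ν))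
    (hint : Integrable (fun p : ℝ × ℝ × X => F' p.1 p.2.1 p.2.2)
      ((volume.restrict (Icc 0 τ)).prod (volume.prod ν))) :
    ∫ p, F' p.1 p.2.1 p.2.2 ∂((volume.restrict (Icc 0 τ)).prod (volume.prod ν)) =
      ν.real univ := by
  refine (integral_restrict_Icc_prod_eq_integral_sub (F := fun t (x : ℝ × X) => F t x.1 x.2)
    (F' := fun t x => F' t x.1 x.2) hτ (fun t x => hF t x.1 x.2) hint).trans ?_
  have hτx : ∀ x : ℝ × X, F τ x.1 x.2 = F 0 (x.1 - 1) x.2 := fun x => by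
    simpa using hshift (x.1 - 1) x.2
  simp_rw [hτx]
  exact integral_prod_shift_sub_eq hφ

theorem tendsto_setIntegral_mul_of_tendstoUniformlyOn {ι X : Type*} [MeasurableSpace X]
    {μ : Measure X} {s : Set X} (hs : μ s < ∞) {l : Filter ι} {h k : ι → X → ℝ} {C : ℝ}
    (hh : TendstoUniformlyOn h 0 l s) (hk : ∀ i, ∀ x ∈ s, |k i x| ≤ C) :
    Tendsto (fun i => ∫ x in s, h i x * k i x ∂μ) l (𝓝 0) := by
  rw [Metric.tendsto_nhds]
  intro ε hε
  set δ := ε / (|C| * μ.real s + 1)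
  have hδpos : 0 < δ := by positivity
  have hδ : δ * (|C| * μ.real s + 1) = ε := div_mul_cancel₀ _ (by positivity)
  filter_upwards [Metric.tendstoUniformlyOn_iff.1 hh δ hδpos] with i hi
  have hbound : ∀ x ∈ s, ‖h i x * k i x‖ ≤ δ * |C| := fun x hx => by
    have hhx := hi x hx
    rw [Pi.zero_apply, dist_zero_left] at hhx
    rw [norm_mul]
    exact mul_le_mul hhx.le ((hk i x hx).trans (le_abs_self C)) (norm_nonneg _) hδpos.le
  rw [dist_zero_right]
  calc ‖∫ x in s, h i x * k i x ∂μ‖ ≤ δ * |C| * μ.real s :=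
        norm_setIntegral_le_of_norm_le_const hs hbound
    _ < ε := by nlinarith

section DivergenceFree

variable {v w : ℝ → ℝ → ℝ} (hv : ContDiff ℝ 1 (uncurry v)) (hw : ContDiff ℝ 1 (uncurry w))
  (hdiv : ∀ a b, partialFst v a b + partialSnd w a b = 0) (hwper : ∀ a, Periodic (w a) 1)
include hv hw hdiv hwper

theorem integral_Ioo_eq_of_divergence_free (a : ℝ) :
    ∫ b in Ioo 0 1, v a b = ∫ b in Ioo 0 1, v 0 b := by
  have hd : ∀ a, HasDerivAt (fun a => ∫ b in Ioo 0 1, v a b) 0 a := fun a => by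
    simpa only [hdiv, integral_zero] using hasDerivAt_integral_Ioo_add_of_periodic zero_le_one
      hv.continuous (hv.continuous_uncurry_partialFst le_rfl)
      (hw.continuous_uncurry_partialSnd le_rfl)
      (hv.differentiable one_ne_zero).hasDerivAt_partialFst
      (hw.differentiable one_ne_zero).hasDerivAt_partialSnd hwper a
  exact is_const_of_deriv_eq_zero (fun a => (hd a).differentiableAt) (fun a => (hd a).deriv) a 0

theorem hasDerivAt_integral_mul_of_divergence_free {g : ℝ → ℝ → ℝ}
    (hg : ContDiff ℝ 1 (uncurry g)) (hgper : ∀ a, Periodic (g a) 1) (a : ℝ) :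
    HasDerivAt (fun a => ∫ b in Ioo 0 1, g a b * v a b)
      (∫ b in Ioo 0 1, (v a b * partialFst g a b + w a b * partialSnd g a b)) a := by
  have dg := hg.differentiable one_ne_zero
  have dv := hv.differentiable one_ne_zero
  have dw := hw.differentiable one_ne_zero
  refine (hasDerivAt_integral_Ioo_add_of_periodic zero_le_one (P := fun a b => g a b * v a b)
    (Q := fun a b => g a b * w a b)
    (P₁ := fun a b => partialFst g a b * v a b + g a b * partialFst v a b)
    (Q₂ := fun a b => partialSnd g a b * w a b + g a b * partialSnd w a b)
    (hg.continuous.mul hv.continuous)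
    (((hg.continuous_uncurry_partialFst le_rfl).mul hv.continuous).add
      (hg.continuous.mul (hv.continuous_uncurry_partialFst le_rfl)))
    (((hg.continuous_uncurry_partialSnd le_rfl).mul hw.continuous).add
      (hg.continuous.mul (hw.continuous_uncurry_partialSnd le_rfl)))
    (fun a b => (dg.hasDerivAt_partialFst a b).mul (dv.hasDerivAt_partialFst a b))
    (fun a b => (dg.hasDerivAt_partialSnd a b).mul (dw.hasDerivAt_partialSnd a b))
    (fun a => (hgper a).mul (hwper a)) a).congr_deriv ?_
  congr 1 with b
  linear_combination g a b * hdiv a b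

theorem integral_advection_eq_zero {g : ℝ → ℝ → ℝ} (hg : ContDiff ℝ 1 (uncurry g))
    (hgper : ∀ a, Periodic (g a) 1) {C : ℝ} (hvC : ∀ a b, |v a b| ≤ C)
    (hflux : ∫ b in Ioo 0 1, v 0 b = 0) (hbot : TendstoUniformlyOn g 1 atBot (Ioo 0 1))
    (htop : TendstoUniformlyOn g 0 atTop (Ioo 0 1))
    (hint : Integrable (fun p : ℝ × ℝ => v p.1 p.2 * partialFst g p.1 p.2 +
      w p.1 p.2 * partialSnd g p.1 p.2) (volume.prod (volume.restrict (Ioo 0 1)))) :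
    ∫ p : ℝ × ℝ, (v p.1 p.2 * partialFst g p.1 p.2 + w p.1 p.2 * partialSnd g p.1 p.2)
      ∂(volume.prod (volume.restrict (Ioo 0 1))) = 0 := by
  refine integral_prod_eq_zero_of_hasDerivAt
    (h := fun a b => v a b * partialFst g a b + w a b * partialSnd g a b) hint
    (hasDerivAt_integral_mul_of_divergence_free hv hw hdiv hwper hg hgper) ?_
    (tendsto_setIntegral_mul_of_tendstoUniformlyOn measure_Ioo_lt_top htop fun a b _ => hvC a b)
  have hflux_eq : (fun a => ∫ b in Ioo 0 1, g a b * v a b) =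
      fun a => ∫ b in Ioo 0 1, (g a b - 1) * v a b := funext fun a => by
    have hgv : Continuous (uncurry fun a b => g a b * v a b) := hg.continuous.mul hv.continuous
    simp_rw [sub_mul, one_mul]
    rw [integral_sub ((hgv.uncurry_left a).integrableOn_Icc.mono_set Ioo_subset_Icc_self)
        ((hv.continuous.uncurry_left a).integrableOn_Icc.mono_set Ioo_subset_Icc_self),
      integral_Ioo_eq_of_divergence_free hv hw hdiv hwper, hflux, sub_zero]
  rw [hflux_eq]
  refine tendsto_setIntegral_mul_of_tendstoUniformlyOn measure_Ioo_lt_top ?_ fun a b _ => hvC a b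
  rw [Metric.tendstoUniformlyOn_iff] at hbot ⊢
  exact fun ε hε => (hbot ε hε).mono fun a ha b hb => by
    simpa [Real.dist_eq, abs_sub_comm] using ha b hb

end DivergenceFree

theorem integral_laplacian_eq_zero {g : ℝ → ℝ → ℝ} (hg : ContDiff ℝ 2 (uncurry g))
    (hper : ∀ a, Periodic (g a) 1)
    (hint : Integrable (fun p : ℝ × ℝ => partialFst (partialFst g) p.1 p.2 +
      partialSnd (partialSnd g) p.1 p.2) (volume.prod (volume.restrict (Ioo 0 1))))
    (hbot : Tendsto (fun a => ∫ b in Ioo 0 1, partialFst g a b) atBot (𝓝 0))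
    (htop : Tendsto (fun a => ∫ b in Ioo 0 1, partialFst g a b) atTop (𝓝 0)) :
    ∫ p : ℝ × ℝ, (partialFst (partialFst g) p.1 p.2 + partialSnd (partialSnd g) p.1 p.2)
      ∂(volume.prod (volume.restrict (Ioo 0 1))) = 0 := by
  have h₁ := hg.uncurry_partialFst (m := 1) (by norm_num)
  have h₂ := hg.uncurry_partialSnd (m := 1) (by norm_num)
  exact integral_prod_eq_zero_of_hasDerivAt
    (h := fun a b => partialFst (partialFst g) a b + partialSnd (partialSnd g) a b) hint
    (hasDerivAt_integral_Ioo_add_of_periodic zero_le_one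
      (hg.continuous_uncurry_partialFst (by norm_num))
      (h₁.continuous_uncurry_partialFst le_rfl) (h₂.continuous_uncurry_partialSnd le_rfl)
      (h₁.differentiable one_ne_zero).hasDerivAt_partialFst
      (h₂.differentiable one_ne_zero).hasDerivAt_partialSnd (fun a => (hper a).deriv))
    hbot htop

theorem stmt11_general (c A : ℝ) (hc : 0 < c) (f : ℝ → ℝ)
    (u : ℝ × ℝ → ℝ × ℝ) (hu : ContDiff ℝ 1 u)
    (hdiv : ∀ x₁ x₂ : ℝ,
      deriv (fun a => (u (a, x₂)).1) x₁ + deriv (fun b => (u (x₁, b)).2) x₂ = 0)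
    (huper1 : ∀ x₁ x₂ : ℝ, u (x₁ + 1, x₂) = u (x₁, x₂))
    (huper2 : ∀ x₁ x₂ : ℝ, u (x₁, x₂ + 1) = u (x₁, x₂))
    (hflux : ∫ x₂ in Ioo (0 : ℝ) 1, (u (0, x₂)).1 = 0)
    (T : ℝ → ℝ → ℝ → ℝ) (hT : ContDiff ℝ 2 (fun p : ℝ × ℝ × ℝ => T p.1 p.2.1 p.2.2))
    (hpde : ∀ t x₁ x₂ : ℝ, pdt T t x₁ x₂ +
      A * ((u (x₁, x₂)).1 * pd1 T t x₁ x₂ + (u (x₁, x₂)).2 * pd2 T t x₁ x₂) =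
      plap T t x₁ x₂ + f (T t x₁ x₂))
    (hTper2 : ∀ t x₁ x₂ : ℝ, T t x₁ (x₂ + 1) = T t x₁ x₂)
    (hTper1 : ∀ t x₁ x₂ : ℝ, T (t + 1 / c) (x₁ + 1) x₂ = T t x₁ x₂)
    (hlim1 : ∀ ε > 0, ∃ M : ℝ, ∀ x₁ ≤ -M, ∀ x₂ ∈ Icc (0 : ℝ) 1, ∀ t ∈ Icc (0 : ℝ) (1 / c),
      |T t x₁ x₂ - 1| < ε)
    (hlim0 : ∀ ε > 0, ∃ M : ℝ, ∀ x₁ ≥ M, ∀ x₂ ∈ Icc (0 : ℝ) 1, ∀ t ∈ Icc (0 : ℝ) (1 / c),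
      |T t x₁ x₂| < ε)
    (hint1 : IntegrableOn (fun p : ℝ × ℝ × ℝ => pdt T p.1 p.2.1 p.2.2)
      (Icc (0 : ℝ) (1 / c) ×ˢ (univ : Set ℝ) ×ˢ Ioo (0 : ℝ) 1) volume)
    (hint3 : IntegrableOn (fun p : ℝ × ℝ × ℝ =>
        (u (p.2.1, p.2.2)).1 * pd1 T p.1 p.2.1 p.2.2 + (u (p.2.1, p.2.2)).2 * pd2 T p.1 p.2.1 p.2.2)
      (Icc (0 : ℝ) (1 / c) ×ˢ (univ : Set ℝ) ×ˢ Ioo (0 : ℝ) 1) volume)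
    (hint4 : IntegrableOn (fun p : ℝ × ℝ × ℝ => plap T p.1 p.2.1 p.2.2)
      (Icc (0 : ℝ) (1 / c) ×ˢ (univ : Set ℝ) ×ˢ Ioo (0 : ℝ) 1) volume)
    (hint0 : IntegrableOn (fun x : ℝ × ℝ => T 0 x.1 x.2 - if x.1 < 0 then 1 else 0)
      ((univ : Set ℝ) ×ˢ Ioo (0 : ℝ) 1) volume)
    (hbdry : ∀ t ∈ Icc (0 : ℝ) (1 / c),
      Tendsto (fun R => ∫ x₂ in Ioo (0 : ℝ) 1, pd1 T t R x₂) atTop (nhds 0) ∧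
      Tendsto (fun R => ∫ x₂ in Ioo (0 : ℝ) 1, pd1 T t R x₂) atBot (nhds 0)) :
    ∫ p in Icc (0 : ℝ) (1 / c) ×ˢ (univ : Set ℝ) ×ˢ Ioo (0 : ℝ) 1,
      f (T p.1 p.2.1 p.2.2) = 1 := by
  simp only [IntegrableOn, volume_restrict_prod, Measure.restrict_univ] at hint0 hint1 hint3 hint4 ⊢
  set μ := (volume.restrict (Icc 0 (1 / c))).prod
    ((volume : Measure ℝ).prod (volume.restrict (Ioo (0 : ℝ) 1)))
  have hTt : ∀ t, ContDiff ℝ 2 (uncurry (T t)) := fun t =>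
    hT.comp (contDiff_const.prodMk contDiff_id)
  have hdt : ∀ t a y, HasDerivAt (fun s => T s a y) (pdt T t a y) t := fun t a y =>
    ((hT.differentiable two_ne_zero).comp
      (differentiable_id.prodMk (differentiable_const (a, y))) t).hasDerivAt
  have htime : ∫ p, pdt T p.1 p.2.1 p.2.2 ∂μ = 1 :=
    (integral_restrict_Icc_prod_prod_deriv_eq_of_shift (F := T) (by positivity) hdt
      (fun a y => by simpa using hTper1 0 a y) hint0 hint1).trans (by simp)
  have hfront : ∀ t ∈ Icc 0 (1 / c),
      TendstoUniformlyOn (T t) 1 atBot (Ioo 0 1) ∧ TendstoUniformlyOn (T t) 0 atTop (Ioo 0 1) := by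
    refine fun t ht => ⟨Metric.tendstoUniformlyOn_iff.2 fun ε hε => ?_,
      Metric.tendstoUniformlyOn_iff.2 fun ε hε => ?_⟩
    · obtain ⟨M, hM⟩ := hlim1 ε hε
      exact eventually_atBot.2 ⟨-M, fun a ha b hb => by
        simpa [Real.dist_eq, abs_sub_comm] using hM a ha b (Ioo_subset_Icc_self hb) t ht⟩
    · obtain ⟨M, hM⟩ := hlim0 ε hε
      exact eventually_atTop.2 ⟨M, fun a ha b hb => by
        simpa using hM a ha b (Ioo_subset_Icc_self hb) t ht⟩
  obtain ⟨C, hC⟩ := hu.continuous.exists_forall_norm_le_of_periodic (fun b a => huper1 a b) huper2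
  have hadv : ∫ p, ((u (p.2.1, p.2.2)).1 * pd1 T p.1 p.2.1 p.2.2 +
      (u (p.2.1, p.2.2)).2 * pd2 T p.1 p.2.1 p.2.2) ∂μ = 0 :=
    integral_restrict_prod_eq_zero_of_slices measurableSet_Icc hint3 fun t ht hslice =>
      integral_advection_eq_zero (v := fun a b => (u (a, b)).1) (w := fun a b => (u (a, b)).2)
        (contDiff_fst.comp hu) (contDiff_snd.comp hu) hdiv
        (fun a b => congrArg Prod.snd (huper2 a b)) ((hTt t).of_le one_le_two) (hTper2 t)
        (fun a b => (norm_fst_le _).trans (hC _)) hflux (hfront t ht).1 (hfront t ht).2 hslice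
  have hlap : ∫ p, plap T p.1 p.2.1 p.2.2 ∂μ = 0 :=
    integral_restrict_prod_eq_zero_of_slices measurableSet_Icc hint4 fun t ht hslice =>
      integral_laplacian_eq_zero (hTt t) (hTper2 t) hslice (hbdry t ht).2 (hbdry t ht).1
  simp_rw [fun t x₁ x₂ => eq_sub_of_add_eq' (hpde t x₁ x₂).symm]
  rw [integral_sub ?_ hint4, integral_add hint1 ?_, integral_const_mul, htime, hadv, hlap]
  · ring
  · exact hint3.const_mul A
  · exact hint1.add (hint3.const_mul A)

/-- First integral identity in the proof of Lemma 4.1: for a pulsating front `T` with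
speed `c` of `T_t + A·u·∇T = ΔT + f(T)` on the strip (with `u` incompressible, periodic,
of mean-zero horizontal flux), integrating the equation over `[0, 1/c] × (ℝ × (0,1))`
gives `∫∫ f(T) = 1`. -/
theorem stmt11 (c A : ℝ) (hc : 0 < c) (f : ℝ → ℝ) (hf : Continuous f)
    (u : ℝ × ℝ → ℝ × ℝ) (hu : ContDiff ℝ 1 u)
    (hdiv : ∀ x₁ x₂ : ℝ,
      deriv (fun a => (u (a, x₂)).1) x₁ + deriv (fun b => (u (x₁, b)).2) x₂ = 0)
    (huper1 : ∀ x₁ x₂ : ℝ, u (x₁ + 1, x₂) = u (x₁, x₂))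
    (huper2 : ∀ x₁ x₂ : ℝ, u (x₁, x₂ + 1) = u (x₁, x₂))
    (hflux : ∫ x₂ in Ioo (0 : ℝ) 1, (u (0, x₂)).1 = 0)
    (T : ℝ → ℝ → ℝ → ℝ) (hT : ContDiff ℝ 2 (fun p : ℝ × ℝ × ℝ => T p.1 p.2.1 p.2.2))
    (hpde : ∀ t x₁ x₂ : ℝ, pdt T t x₁ x₂ +
      A * ((u (x₁, x₂)).1 * pd1 T t x₁ x₂ + (u (x₁, x₂)).2 * pd2 T t x₁ x₂) =
      plap T t x₁ x₂ + f (T t x₁ x₂))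
    (hTper2 : ∀ t x₁ x₂ : ℝ, T t x₁ (x₂ + 1) = T t x₁ x₂)
    (hTper1 : ∀ t x₁ x₂ : ℝ, T (t + 1 / c) (x₁ + 1) x₂ = T t x₁ x₂)
    (hlim1 : ∀ ε > 0, ∃ M : ℝ, ∀ x₁ ≤ -M, ∀ x₂ ∈ Icc (0 : ℝ) 1, ∀ t ∈ Icc (0 : ℝ) (1 / c),
      |T t x₁ x₂ - 1| < ε)
    (hlim0 : ∀ ε > 0, ∃ M : ℝ, ∀ x₁ ≥ M, ∀ x₂ ∈ Icc (0 : ℝ) 1, ∀ t ∈ Icc (0 : ℝ) (1 / c),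
      |T t x₁ x₂| < ε)
    (hint1 : IntegrableOn (fun p : ℝ × ℝ × ℝ => pdt T p.1 p.2.1 p.2.2)
      (Icc (0 : ℝ) (1 / c) ×ˢ (univ : Set ℝ) ×ˢ Ioo (0 : ℝ) 1) volume)
    (hint2 : IntegrableOn (fun p : ℝ × ℝ × ℝ => f (T p.1 p.2.1 p.2.2))
      (Icc (0 : ℝ) (1 / c) ×ˢ (univ : Set ℝ) ×ˢ Ioo (0 : ℝ) 1) volume)
    (hint3 : IntegrableOn (fun p : ℝ × ℝ × ℝ =>
        (u (p.2.1, p.2.2)).1 * pd1 T p.1 p.2.1 p.2.2 + (u (p.2.1, p.2.2)).2 * pd2 T p.1 p.2.1 p.2.2)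
      (Icc (0 : ℝ) (1 / c) ×ˢ (univ : Set ℝ) ×ˢ Ioo (0 : ℝ) 1) volume)
    (hint4 : IntegrableOn (fun p : ℝ × ℝ × ℝ => plap T p.1 p.2.1 p.2.2)
      (Icc (0 : ℝ) (1 / c) ×ˢ (univ : Set ℝ) ×ˢ Ioo (0 : ℝ) 1) volume)
    (hint0 : IntegrableOn (fun x : ℝ × ℝ => T 0 x.1 x.2 - if x.1 < 0 then 1 else 0)
      ((univ : Set ℝ) ×ˢ Ioo (0 : ℝ) 1) volume)
    (hbdry : ∀ t ∈ Icc (0 : ℝ) (1 / c),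
      Tendsto (fun R => ∫ x₂ in Ioo (0 : ℝ) 1, pd1 T t R x₂) atTop (nhds 0) ∧
      Tendsto (fun R => ∫ x₂ in Ioo (0 : ℝ) 1, pd1 T t R x₂) atBot (nhds 0)) :
    ∫ p in Icc (0 : ℝ) (1 / c) ×ˢ (univ : Set ℝ) ×ˢ Ioo (0 : ℝ) 1,
      f (T p.1 p.2.1 p.2.2) = 1 :=
  stmt11_general c A hc f u hu hdiv huper1 huper2 hflux T hT hpde hTper2 hTper1 hlim1 hlim0 hint1
    hint3 hint4 hint0 hbdry
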